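/- arXiv:2006.02815 — 2 statements merged into one kernel-verified Lean document; each statement's English description precedes it below -/
import Mathlib

section
/- Let β > 0, σ̃ ∈ [0,1), σ̂ ∈ [0,1), σ ∈ [σ̂, 1), and τ, θ ∈ ℝ with τ + θ > 0. Let G ∈ ℝ^{n×n}, H ∈ ℝ^{p×p} be symmetric positive semidefinite and B ∈ ℝ^{m×p}, and define the quadratic form Q_M(x, y, γ) = ⟨Gx, x⟩ + ⟨Hy, y⟩ + ((τ−τθ+θ)β/(τ+θ))‖By‖² − (2τ/(τ+θ))⟨By, γ⟩ + (1/((τ+θ)β))‖γ‖². Let x̃, x_{k−1}, x_k ∈ ℝ^n, y_{k−1}, y_k ∈ ℝ^p, q ∈ ℝ^m, set p = B(y_k − y_{k−1}), and assume the relative error criterion ‖x̃ − x_k‖_G² ≤ σ̂‖x̃ − x_{k−1}‖_G² + (σ̃/β)‖βp + q‖². Then σ·Q_M(x̃ − x_{k−1}, y_k − y_{k−1}, βp + q) − Q_M(x̃ − x_k, 0, (1−τ)βp + (1−τ−θ)q) ≥ (φ̂(σ)β/(τ+θ))‖p‖² + (2φ(σ)/(τ+θ))⟨p, q⟩ + (φ̃(σ)/((τ+θ)β))‖q‖²,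 where φ(σ) = (1−τ)(σ−1) + (1−τ−σ̃)(τ+θ), φ̂(σ) = (1−τ)[(1+θ)σ − 1 + τ] − σ̃(τ+θ), and φ̃(σ) = σ − (1−τ−θ)² − σ̃(τ+θ). -/
/-!
Write `a = ‖x̃ - x_{k-1}‖_G²`, `b = ‖x̃ - x_k‖_G²`, `h = ‖y_k - y_{k-1}‖_H²` and `w = βp + q`.
Expanding both quadratic forms in `‖p‖²`, `⟨p, q⟩`, `‖q‖²`, the difference
`σ Q_M(…) - Q_M(…)` equals the claimed lower bound plus `σa - b + σh + (σ̃/β)‖w‖²`;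
the `σ̃`-terms of `φ`, `φ̂`, `φ̃` are exactly the expansion of `-(σ̃/β)‖w‖²`.
The error criterion together with `σ̂ ≤ σ` gives `b ≤ σa + (σ̃/β)‖w‖²`, and `σh ≥ 0`,
so this excess is nonnegative.
-/

open Matrix

theorem Matrix.PosSemidef.mulVec_dotProduct_self_nonneg {ι : Type*} [Fintype ι]
    {M : Matrix ι ι ℝ} (hM : M.PosSemidef) (x : ι → ℝ) : 0 ≤ (M *ᵥ x) ⬝ᵥ x := by
  simpa [dotProduct_comm] using hM.dotProduct_mulVec_nonneg x

theorem dotProduct_smul_add_smul_self {ι R : Type*} [Fintype ι] [CommRing R]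
    (u v : ι → R) (c d : R) :
    (c • u + d • v) ⬝ᵥ (c • u + d • v)
      = c ^ 2 * (u ⬝ᵥ u) + 2 * c * d * (u ⬝ᵥ v) + d ^ 2 * (v ⬝ᵥ v) := by
  simp only [dotProduct_add, add_dotProduct, dotProduct_smul, smul_dotProduct, smul_eq_mul,
    dotProduct_comm v u]
  ring

theorem dotProduct_smul_add_self {ι R : Type*} [Fintype ι] [CommRing R]
    (u v : ι → R) (c : R) :
    (c • u + v) ⬝ᵥ (c • u + v) = c ^ 2 * (u ⬝ᵥ u) + 2 * c * (u ⬝ᵥ v) + v ⬝ᵥ v := by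
  simpa using dotProduct_smul_add_smul_self u v c 1

/-- `a, b, h` stand for the `G`- and `H`-norms and `P, S, Q` for `‖p‖², ⟨p, q⟩, ‖q‖²`. -/
theorem relError_gap_eq {β τ θ σ σt : ℝ} (hβ : β ≠ 0) (hτθ : τ + θ ≠ 0) (a b h P S Q : ℝ) :
    σ * (a + h + (τ - τ * θ + θ) * β / (τ + θ) * P
        - 2 * τ / (τ + θ) * (β * P + S)
        + 1 / ((τ + θ) * β) * (β ^ 2 * P + 2 * β * S + Q))
      - (b + 1 / ((τ + θ) * β) * (((1 - τ) * β) ^ 2 * P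
        + 2 * ((1 - τ) * β) * (1 - τ - θ) * S + (1 - τ - θ) ^ 2 * Q))
    = ((1 - τ) * ((1 + θ) * σ - 1 + τ) - σt * (τ + θ)) * β / (τ + θ) * P
      + 2 * ((1 - τ) * (σ - 1) + (1 - τ - σt) * (τ + θ)) / (τ + θ) * S
      + (σ - (1 - τ - θ) ^ 2 - σt * (τ + θ)) / ((τ + θ) * β) * Q
      + (σ * a - b + σ * h + σt / β * (β ^ 2 * P + 2 * β * S + Q)) := by
  field_simp
  ring

theorem stmt14_general (n p_ m : ℕ) (β σt σh σ τ θ : ℝ)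
    (hβ : 0 < β) (hσh0 : 0 ≤ σh)
    (hσl : σh ≤ σ) (hτθ : 0 < τ + θ)
    (G : Matrix (Fin n) (Fin n) ℝ) (H : Matrix (Fin p_) (Fin p_) ℝ)
    (hG : G.PosSemidef) (hH : H.PosSemidef)
    (B : Matrix (Fin m) (Fin p_) ℝ)
    (QM : (Fin n → ℝ) → (Fin p_ → ℝ) → (Fin m → ℝ) → ℝ)
    (hQM : ∀ x y γ, QM x y γ =
      (G *ᵥ x) ⬝ᵥ x + (H *ᵥ y) ⬝ᵥ y
        + ((τ - τ * θ + θ) * β / (τ + θ)) * ((B *ᵥ y) ⬝ᵥ (B *ᵥ y))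
        - (2 * τ / (τ + θ)) * ((B *ᵥ y) ⬝ᵥ γ)
        + (1 / ((τ + θ) * β)) * (γ ⬝ᵥ γ))
    (xt xkm1 xk : Fin n → ℝ) (ykm1 yk : Fin p_ → ℝ) (q : Fin m → ℝ)
    (pv : Fin m → ℝ) (hpv : pv = B *ᵥ (yk - ykm1))
    (herr : (G *ᵥ (xt - xk)) ⬝ᵥ (xt - xk)
      ≤ σh * ((G *ᵥ (xt - xkm1)) ⬝ᵥ (xt - xkm1))
        + (σt / β) * ((β • pv + q) ⬝ᵥ (β • pv + q))) :
    σ * QM (xt - xkm1) (yk - ykm1) (β • pv + q)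
      - QM (xt - xk) 0 (((1 - τ) * β) • pv + (1 - τ - θ) • q)
    ≥ (((1 - τ) * ((1 + θ) * σ - 1 + τ) - σt * (τ + θ)) * β / (τ + θ)) * (pv ⬝ᵥ pv)
      + (2 * ((1 - τ) * (σ - 1) + (1 - τ - σt) * (τ + θ)) / (τ + θ)) * (pv ⬝ᵥ q)
      + ((σ - (1 - τ - θ) ^ 2 - σt * (τ + θ)) / ((τ + θ) * β)) * (q ⬝ᵥ q) := by
  have hcross : pv ⬝ᵥ (β • pv + q) = β * (pv ⬝ᵥ pv) + pv ⬝ᵥ q := by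
    simp only [dotProduct_add, dotProduct_smul, smul_eq_mul]
  rw [hQM, hQM, ← hpv, hcross, dotProduct_smul_add_self, dotProduct_smul_add_smul_self]
  rw [dotProduct_smul_add_self] at herr
  simp only [mulVec_zero, dotProduct_zero, zero_dotProduct, mul_zero, add_zero, sub_zero]
  rw [relError_gap_eq (σt := σt) hβ.ne' hτθ.ne']
  have hGx : σh * ((G *ᵥ (xt - xkm1)) ⬝ᵥ (xt - xkm1))
      ≤ σ * ((G *ᵥ (xt - xkm1)) ⬝ᵥ (xt - xkm1)) :=
    mul_le_mul_of_nonneg_right hσl (hG.mulVec_dotProduct_self_nonneg _)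
  have hHy : 0 ≤ σ * ((H *ᵥ (yk - ykm1)) ⬝ᵥ (yk - ykm1)) :=
    mul_nonneg (hσh0.trans hσl) (hH.mulVec_dotProduct_self_nonneg _)
  linarith

/-- Under the relative error criterion, the lower bound
`σ·Q_M(x̃−x_{k−1}, y_k−y_{k−1}, βp+q) − Q_M(x̃−x_k, 0, (1−τ)βp+(1−τ−θ)q)
 ≥ (φ̂(σ)β/(τ+θ))‖p‖² + (2φ(σ)/(τ+θ))⟨p,q⟩ + (φ̃(σ)/((τ+θ)β))‖q‖²`. -/
theorem stmt14 (n p_ m : ℕ) (β σt σh σ τ θ : ℝ)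
    (hβ : 0 < β) (hσt0 : 0 ≤ σt) (hσt1 : σt < 1) (hσh0 : 0 ≤ σh) (hσh1 : σh < 1)
    (hσl : σh ≤ σ) (hσu : σ < 1) (hτθ : 0 < τ + θ)
    (G : Matrix (Fin n) (Fin n) ℝ) (H : Matrix (Fin p_) (Fin p_) ℝ)
    (hG : G.PosSemidef) (hH : H.PosSemidef)
    (B : Matrix (Fin m) (Fin p_) ℝ)
    (QM : (Fin n → ℝ) → (Fin p_ → ℝ) → (Fin m → ℝ) → ℝ)
    (hQM : ∀ x y γ, QM x y γ =
      (G *ᵥ x) ⬝ᵥ x + (H *ᵥ y) ⬝ᵥ y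
        + ((τ - τ * θ + θ) * β / (τ + θ)) * ((B *ᵥ y) ⬝ᵥ (B *ᵥ y))
        - (2 * τ / (τ + θ)) * ((B *ᵥ y) ⬝ᵥ γ)
        + (1 / ((τ + θ) * β)) * (γ ⬝ᵥ γ))
    (xt xkm1 xk : Fin n → ℝ) (ykm1 yk : Fin p_ → ℝ) (q : Fin m → ℝ)
    (pv : Fin m → ℝ) (hpv : pv = B *ᵥ (yk - ykm1))
    (herr : (G *ᵥ (xt - xk)) ⬝ᵥ (xt - xk)
      ≤ σh * ((G *ᵥ (xt - xkm1)) ⬝ᵥ (xt - xkm1))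
        + (σt / β) * ((β • pv + q) ⬝ᵥ (β • pv + q))) :
    σ * QM (xt - xkm1) (yk - ykm1) (β • pv + q)
      - QM (xt - xk) 0 (((1 - τ) * β) • pv + (1 - τ - θ) • q)
    ≥ (((1 - τ) * ((1 + θ) * σ - 1 + τ) - σt * (τ + θ)) * β / (τ + θ)) * (pv ⬝ᵥ pv)
      + (2 * ((1 - τ) * (σ - 1) + (1 - τ - σt) * (τ + θ)) / (τ + θ)) * (pv ⬝ᵥ q)
      + ((σ - (1 - τ - θ) ^ 2 - σt * (τ + θ)) / ((τ + θ) * β)) * (q ⬝ᵥ q) :=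
  stmt14_general n p_ m β σt σh σ τ θ hβ hσh0 hσl hτθ G H hG hH B QM hQM xt xkm1 xk ykm1 yk q pv hpv
    herr
end

section
/- Let M ∈ ℝ^{N×N} be symmetric positive semidefinite and λ ≥ 0 satisfy ‖Mv‖² ≤ λ⟨Mv, v⟩ for all v ∈ ℝ^N (e.g., λ the largest eigenvalue of M). Let T : ℝ^N → Set(ℝ^N) be monotone, let z* satisfy 0 ∈ T(z*), let σ ∈ [0,1), and let sequences (z_k)_{k≥0}, (z̃_k)_{k≥1} in ℝ^N and nonnegative reals (η_k)_{k≥0} satisfy, for every k ≥ 1, M(z_{k−1} − z_k) ∈ T(z̃_k) and ‖z̃_k − z_k‖_M² + η_k ≤ σ‖z̃_k − z_{k−1}‖_M² + η_{k−1}. Then for every k ≥ 1, ‖(1/k) M(z_0 − z_k)‖² ≤ (4λ/k²)(‖z* − z_0‖_M² + η_0). -/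
open Matrix

/-!
Fejér monotonicity of the hybrid proximal extragradient method in the `M`-seminorm. Writing
`a = z_{k-1}`, `b = z_k`, `c = z̃_k`, the three-point identity
`‖s - b‖²_M - ‖s - a‖²_M = ‖c - b‖²_M - ‖c - a‖²_M - 2⟨M(a - b), c - s⟩`
together with monotonicity of `T` at `c` and at the zero `s = z*` and the relative error
criterion shows that `‖z* - z_k‖²_M + η_k` is nonincreasing. Hence
`‖z_0 - z_k‖²_M ≤ 2‖z* - z_k‖²_M + 2‖z* - z_0‖²_M ≤ 4(‖z* - z_0‖²_M + η_0)`, and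
`‖Mv‖² ≤ λ‖v‖²_M` turns this into the bound on the residual `M(z_0 - z_k)`.
-/

namespace Matrix

variable {n R : Type*}

theorem PosSemidef.isSymm {M : Matrix n n ℝ} (hM : M.PosSemidef) : M.IsSymm :=
  isHermitian_iff_isSymm.mp hM.1

variable [Fintype n]

theorem IsSymm.mulVec_dotProduct_comm [CommSemiring R] {M : Matrix n n R} (hM : M.IsSymm)
    (x y : n → R) : (M *ᵥ x) ⬝ᵥ y = (M *ᵥ y) ⬝ᵥ x := by
  rw [dotProduct_comm, dotProduct_mulVec, ← mulVec_transpose, hM.eq]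

theorem IsSymm.mulVec_sub_dotProduct_sub_three_point [CommRing R] {M : Matrix n n R}
    (hM : M.IsSymm) (s a b c : n → R) :
    (M *ᵥ (s - b)) ⬝ᵥ (s - b) - (M *ᵥ (s - a)) ⬝ᵥ (s - a)
      = (M *ᵥ (c - b)) ⬝ᵥ (c - b) - (M *ᵥ (c - a)) ⬝ᵥ (c - a)
        - 2 * ((M *ᵥ (a - b)) ⬝ᵥ (c - s)) := by
  simp only [mulVec_sub, sub_dotProduct, dotProduct_sub]
  rw [hM.mulVec_dotProduct_comm s a, hM.mulVec_dotProduct_comm s b, hM.mulVec_dotProduct_comm c a,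
    hM.mulVec_dotProduct_comm c b]
  ring

theorem PosSemidef.mulVec_dotProduct_self_nonneg_s17 {M : Matrix n n ℝ} (hM : M.PosSemidef)
    (x : n → ℝ) : 0 ≤ (M *ᵥ x) ⬝ᵥ x := by
  simpa [dotProduct_comm] using hM.dotProduct_mulVec_nonneg x

theorem PosSemidef.mulVec_sub_dotProduct_sub_le {M : Matrix n n ℝ} (hM : M.PosSemidef)
    (x y : n → ℝ) :
    (M *ᵥ (x - y)) ⬝ᵥ (x - y) ≤ 2 * ((M *ᵥ x) ⬝ᵥ x) + 2 * ((M *ᵥ y) ⬝ᵥ y) := by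
  have hsum := hM.mulVec_dotProduct_self_nonneg_s17 (x + y)
  simp only [mulVec_sub, mulVec_add, sub_dotProduct, dotProduct_sub, add_dotProduct,
    dotProduct_add] at hsum ⊢
  rw [hM.isSymm.mulVec_dotProduct_comm x y] at hsum ⊢
  linarith

end Matrix

theorem hpe_step_mulVec_dotProduct_sub_add_le {n : Type*} [Fintype n] {M : Matrix n n ℝ}
    (hM : M.PosSemidef) {s a b c : n → ℝ} {σ ηa ηb : ℝ} (hσ : σ ≤ 1)
    (hmono : 0 ≤ (M *ᵥ (a - b)) ⬝ᵥ (c - s))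
    (herr : (M *ᵥ (c - b)) ⬝ᵥ (c - b) + ηb ≤ σ * ((M *ᵥ (c - a)) ⬝ᵥ (c - a)) + ηa) :
    (M *ᵥ (s - b)) ⬝ᵥ (s - b) + ηb ≤ (M *ᵥ (s - a)) ⬝ᵥ (s - a) + ηa := by
  have hid := hM.isSymm.mulVec_sub_dotProduct_sub_three_point s a b c
  have hca := hM.mulVec_dotProduct_self_nonneg_s17 (c - a)
  nlinarith [mul_le_mul_of_nonneg_right hσ hca]

theorem stmt17_general (N : ℕ) (M : Matrix (Fin N) (Fin N) ℝ) (hM : M.PosSemidef)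
    (lam : ℝ) (hlam0 : 0 ≤ lam)
    (hlam : ∀ v : Fin N → ℝ, (M *ᵥ v) ⬝ᵥ (M *ᵥ v) ≤ lam * ((M *ᵥ v) ⬝ᵥ v))
    (T : (Fin N → ℝ) → Set (Fin N → ℝ))
    (hT : ∀ z z' w w', w ∈ T z → w' ∈ T z' → 0 ≤ (w - w') ⬝ᵥ (z - z'))
    (zs : Fin N → ℝ) (hzs : (0 : Fin N → ℝ) ∈ T zs)
    (σ : ℝ) (hσ1 : σ < 1)
    (z : ℕ → Fin N → ℝ) (zt : ℕ → Fin N → ℝ) (η : ℕ → ℝ) (hη : ∀ k, 0 ≤ η k)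
    (hincl : ∀ k, 1 ≤ k → M *ᵥ (z (k - 1) - z k) ∈ T (zt k))
    (hhpe : ∀ k, 1 ≤ k →
      (M *ᵥ (zt k - z k)) ⬝ᵥ (zt k - z k) + η k
        ≤ σ * ((M *ᵥ (zt k - z (k - 1))) ⬝ᵥ (zt k - z (k - 1))) + η (k - 1)) :
    ∀ k : ℕ, 1 ≤ k →
      ((1 / (k : ℝ)) • (M *ᵥ (z 0 - z k))) ⬝ᵥ ((1 / (k : ℝ)) • (M *ᵥ (z 0 - z k)))
        ≤ (4 * lam / (k : ℝ) ^ 2) * ((M *ᵥ (zs - z 0)) ⬝ᵥ (zs - z 0) + η 0) := by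
  set V : ℕ → ℝ := fun j => (M *ᵥ (zs - z j)) ⬝ᵥ (zs - z j) + η j
  have hV_anti : Antitone V := antitone_nat_of_succ_le fun j => by
    have hmono := hT _ _ _ _ (hincl (j + 1) j.succ_pos) hzs
    rw [sub_zero] at hmono
    exact hpe_step_mulVec_dotProduct_sub_add_le hM hσ1.le hmono (hhpe (j + 1) j.succ_pos)
  intro k _
  have hdist : (M *ᵥ (z 0 - z k)) ⬝ᵥ (z 0 - z k) ≤ 4 * V 0 := calc
    _ = (M *ᵥ ((zs - z k) - (zs - z 0))) ⬝ᵥ ((zs - z k) - (zs - z 0)) := by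
      rw [sub_sub_sub_cancel_left]
    _ ≤ 2 * ((M *ᵥ (zs - z k)) ⬝ᵥ (zs - z k)) + 2 * ((M *ᵥ (zs - z 0)) ⬝ᵥ (zs - z 0)) :=
      hM.mulVec_sub_dotProduct_sub_le _ _
    _ ≤ 4 * V 0 := by linarith [hη 0, hη k, hV_anti (Nat.zero_le k)]
  calc _ = (M *ᵥ (z 0 - z k)) ⬝ᵥ (M *ᵥ (z 0 - z k)) / (k : ℝ) ^ 2 := by
        rw [smul_dotProduct, dotProduct_smul, smul_eq_mul, smul_eq_mul]; ring
    _ ≤ lam * ((M *ᵥ (z 0 - z k)) ⬝ᵥ (z 0 - z k)) / (k : ℝ) ^ 2 := by gcongr; exact hlam _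
    _ ≤ lam * (4 * V 0) / (k : ℝ) ^ 2 := by gcongr
    _ = _ := by ring

/-- Ergodic residual bound
`‖(1/k)M(z_0 − z_k)‖² ≤ (4λ/k²)(‖z* − z_0‖_M² + η_0)`. -/
theorem stmt17 (N : ℕ) (M : Matrix (Fin N) (Fin N) ℝ) (hM : M.PosSemidef)
    (lam : ℝ) (hlam0 : 0 ≤ lam)
    (hlam : ∀ v : Fin N → ℝ, (M *ᵥ v) ⬝ᵥ (M *ᵥ v) ≤ lam * ((M *ᵥ v) ⬝ᵥ v))
    (T : (Fin N → ℝ) → Set (Fin N → ℝ))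
    (hT : ∀ z z' w w', w ∈ T z → w' ∈ T z' → 0 ≤ (w - w') ⬝ᵥ (z - z'))
    (zs : Fin N → ℝ) (hzs : (0 : Fin N → ℝ) ∈ T zs)
    (σ : ℝ) (hσ0 : 0 ≤ σ) (hσ1 : σ < 1)
    (z : ℕ → Fin N → ℝ) (zt : ℕ → Fin N → ℝ) (η : ℕ → ℝ) (hη : ∀ k, 0 ≤ η k)
    (hincl : ∀ k, 1 ≤ k → M *ᵥ (z (k - 1) - z k) ∈ T (zt k))
    (hhpe : ∀ k, 1 ≤ k →
      (M *ᵥ (zt k - z k)) ⬝ᵥ (zt k - z k) + η k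
        ≤ σ * ((M *ᵥ (zt k - z (k - 1))) ⬝ᵥ (zt k - z (k - 1))) + η (k - 1)) :
    ∀ k : ℕ, 1 ≤ k →
      ((1 / (k : ℝ)) • (M *ᵥ (z 0 - z k))) ⬝ᵥ ((1 / (k : ℝ)) • (M *ᵥ (z 0 - z k)))
        ≤ (4 * lam / (k : ℝ) ^ 2) * ((M *ᵥ (zs - z 0)) ⬝ᵥ (zs - z 0) + η 0) :=
  stmt17_general N M hM lam hlam0 hlam T hT zs hzs σ hσ1 z zt η hη hincl hhpe
end
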